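/- Let T ∈ 𝒫₁(ℓ_2). If T is a point of continuity of the identity map from (𝒫₁(ℓ_2), SOT) to (𝒫₁(ℓ_2), SOT*), then T* e_l ≠ 0 for every l ≥ 0, where T* is the Hilbert-space adjoint of T. -/

import Mathlib

/-!
If `T* e_l = 0`, the `l`-th row of `T` vanishes, so replacing the `n`-th column of `T` by `e_l`
yields positive contractions `A_n`. Since `A_n x - T x` is controlled by the coordinate `x n → 0`,
`A_n → T` strongly; but `A_n* e_l = e_n` does not tend to `T* e_l = 0`.
-/

open scoped ENNReal

noncomputable section

/-- The Hilbert space `ℓ₂` of square-summable complex sequences. -/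
abbrev L2 := lp (fun _ : ℕ => ℂ) 2

/-- A vector of `ℓ₂` is positive if all its coordinates are nonnegative reals. -/
def PosVec (x : L2) : Prop := ∀ n : ℕ, 0 ≤ (x n).re ∧ (x n).im = 0

/-- The set `𝒫₁(ℓ₂)` of positive contractions on `ℓ₂`. -/
def P1 : Set (L2 →L[ℂ] L2) :=
  {T | (∀ x : L2, PosVec x → PosVec (T x)) ∧ ‖T‖ ≤ 1}

/-- The strong operator topology (pointwise norm-convergence). -/
def sot : TopologicalSpace (L2 →L[ℂ] L2) :=
  TopologicalSpace.induced (fun T => (fun x : L2 => T x)) Pi.topologicalSpace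

/-- The weak operator topology (pointwise weak convergence). -/
def wot : TopologicalSpace (L2 →L[ℂ] L2) :=
  TopologicalSpace.induced
    (fun T => (fun q : L2 × L2 => (inner ℂ q.1 (T q.2) : ℂ)))
    Pi.topologicalSpace

/-- The dual strong operator topology `SOT_*` (pointwise norm-convergence of the adjoints). -/
def sotStar : TopologicalSpace (L2 →L[ℂ] L2) :=
  TopologicalSpace.induced
    (fun T => (fun x : L2 => (ContinuousLinearMap.adjoint T) x))
    Pi.topologicalSpace

/-- The `SOT*` topology, the join of `SOT` and `SOT_*`.  (In the order on
`TopologicalSpace`, `⊓` is the coarsest topology refining both.) -/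
def sotSStar : TopologicalSpace (L2 →L[ℂ] L2) := sot ⊓ sotStar

/-- Restriction of a topology to a subset. -/
def rtop {α : Type*} (s : Set α) (t : TopologicalSpace α) : TopologicalSpace ↥s :=
  t.induced Subtype.val

/-- Two topologies on the same set are similar if they have the same dense sets. -/
def SimilarTop {Y : Type*} (t t' : TopologicalSpace Y) : Prop :=
  ∀ A : Set Y, @Dense Y t A ↔ @Dense Y t' A

/-- The canonical basis vector `e_n` of `ℓ₂`. -/
def e (n : ℕ) : L2 := lp.single 2 n (1 : ℂ)

open Filter Topology ContinuousLinearMap ComplexOrder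

section InnerProductSpace

variable {𝕜 E : Type*} [RCLike 𝕜] [NormedAddCommGroup E] [InnerProductSpace 𝕜 E]

local notation "⟪" x ", " y "⟫" => @inner 𝕜 _ _ x y

theorem Orthonormal.tendsto_inner_cofinite_zero {ι : Type*} {v : ι → E} (hv : Orthonormal 𝕜 v)
    (x : E) : Tendsto (fun i => ⟪v i, x⟫) cofinite (𝓝 0) := by
  rw [tendsto_zero_iff_norm_tendsto_zero]
  simpa using (hv.inner_products_summable x).tendsto_cofinite_zero.sqrt

/-- When `u` belongs to an orthonormal basis, this is `T` with its column at `u` replaced by `v`. -/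
def replaceColumn (T : E →L[𝕜] E) (u v : E) : E →L[𝕜] E :=
  T.comp (ContinuousLinearMap.id 𝕜 E - (innerSL 𝕜 u).smulRight u) + (innerSL 𝕜 u).smulRight v

theorem replaceColumn_apply (T : E →L[𝕜] E) (u v x : E) :
    replaceColumn T u v x = T (x - ⟪u, x⟫ • u) + ⟪u, x⟫ • v := by
  simp [replaceColumn]

theorem norm_replaceColumn_sub_apply_le {T : E →L[𝕜] E} (hT : ‖T‖ ≤ 1) {u v : E}
    (hu : ‖u‖ = 1) (hv : ‖v‖ ≤ 1) (x : E) :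
    ‖replaceColumn T u v x - T x‖ ≤ 2 * ‖⟪u, x⟫‖ := by
  have hdiff : replaceColumn T u v x - T x = ⟪u, x⟫ • v - T (⟪u, x⟫ • u) := by
    rw [replaceColumn_apply, map_sub]; abel
  have hTu : ‖T (⟪u, x⟫ • u)‖ ≤ ‖⟪u, x⟫‖ := by
    calc ‖T (⟪u, x⟫ • u)‖ ≤ ‖T‖ * ‖⟪u, x⟫ • u‖ := T.le_opNorm _
      _ ≤ 1 * ‖⟪u, x⟫‖ := by rw [norm_smul, hu, mul_one]; gcongr
      _ = ‖⟪u, x⟫‖ := one_mul _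
  calc ‖replaceColumn T u v x - T x‖ ≤ ‖⟪u, x⟫ • v‖ + ‖T (⟪u, x⟫ • u)‖ := by
        rw [hdiff]; exact norm_sub_le _ _
    _ ≤ ‖⟪u, x⟫‖ + ‖⟪u, x⟫‖ := by
        rw [norm_smul]; gcongr; exact mul_le_of_le_one_right (norm_nonneg _) hv
    _ = 2 * ‖⟪u, x⟫‖ := by ring

theorem tendsto_replaceColumn_apply {T : E →L[𝕜] E} (hT : ‖T‖ ≤ 1) {u : ℕ → E} {v : E}
    (hu : ∀ n, ‖u n‖ = 1) (hv : ‖v‖ ≤ 1) {x : E}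
    (hux : Tendsto (fun n => ⟪u n, x⟫) atTop (𝓝 0)) :
    Tendsto (fun n => replaceColumn T (u n) v x) atTop (𝓝 (T x)) := by
  rw [← tendsto_sub_nhds_zero_iff]
  refine squeeze_zero_norm (fun n => norm_replaceColumn_sub_apply_le hT (hu n) hv x) ?_
  simpa using (tendsto_zero_iff_norm_tendsto_zero.1 hux).const_mul 2

/-- Since `v` is orthogonal to the range of `T`, `‖replaceColumn T u v x‖²` splits by Pythagoras
just as `‖x‖² = ‖x - ⟪u, x⟫ • u‖² + ‖⟪u, x⟫‖²` does. -/
theorem norm_replaceColumn_le_one {T : E →L[𝕜] E} (hT : ‖T‖ ≤ 1) {u v : E} (hu : ‖u‖ = 1)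
    (hv : ‖v‖ ≤ 1) (hTv : ∀ y, ⟪v, T y⟫ = 0) : ‖replaceColumn T u v‖ ≤ 1 := by
  refine opNorm_le_bound _ zero_le_one fun x => ?_
  set c := ⟪u, x⟫
  set Q := x - c • u
  have hQu : ⟪Q, c • u⟫ = 0 := by
    simp [Q, c, inner_sub_left, inner_smul_left, inner_smul_right, inner_self_eq_norm_sq_to_K, hu]
  have hTQv : ⟪T Q, c • v⟫ = 0 := by
    rw [inner_smul_right, ← inner_conj_symm, hTv, map_zero, mul_zero]
  have hx : ‖x‖ * ‖x‖ = ‖Q‖ * ‖Q‖ + ‖c • u‖ * ‖c • u‖ := by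
    rw [← norm_add_sq_eq_norm_sq_add_norm_sq_of_inner_eq_zero _ _ hQu, sub_add_cancel]
  have hAx : ‖replaceColumn T u v x‖ * ‖replaceColumn T u v x‖ =
      ‖T Q‖ * ‖T Q‖ + ‖c • v‖ * ‖c • v‖ :=
    replaceColumn_apply T u v x ▸ norm_add_sq_eq_norm_sq_add_norm_sq_of_inner_eq_zero _ _ hTQv
  have hTQ : ‖T Q‖ ≤ ‖Q‖ := (T.le_of_opNorm_le hT Q).trans_eq (one_mul _)
  have hcv : ‖c • v‖ ≤ ‖c • u‖ := by
    rw [norm_smul, norm_smul, hu]; gcongr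
  rw [one_mul, mul_self_le_mul_self_iff (norm_nonneg _) (norm_nonneg _), hAx, hx]
  gcongr

theorem adjoint_replaceColumn_apply [CompleteSpace E] {T : E →L[𝕜] E} (u : E) {v : E}
    (hv : ‖v‖ = 1) (hTv : ∀ y, ⟪v, T y⟫ = 0) : adjoint (replaceColumn T u v) v = u := by
  refine ext_inner_right 𝕜 fun y => ?_
  rw [adjoint_inner_left, replaceColumn_apply, inner_add_right, hTv, inner_smul_right,
    inner_self_eq_norm_sq_to_K, hv]
  simp

end InnerProductSpace

local notation "⟪" x ", " y "⟫" => @inner ℂ _ _ x y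

theorem inner_e_left (n : ℕ) (x : L2) : ⟪e n, x⟫ = x n := by
  rw [e, lp.inner_single_left]
  simp

theorem e_apply (n m : ℕ) : e n m = if m = n then 1 else 0 := by
  rw [e, lp.single_apply, Pi.single_apply]

theorem orthonormal_e : Orthonormal ℂ e := by
  rw [orthonormal_iff_ite]
  intro i j
  rw [inner_e_left, e_apply]

theorem posVec_iff {x : L2} : PosVec x ↔ ∀ n, 0 ≤ x n := by
  simp only [PosVec, Complex.nonneg_iff, eq_comm]

theorem PosVec.add {x y : L2} (hx : PosVec x) (hy : PosVec y) : PosVec (x + y) := by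
  rw [posVec_iff] at *
  exact fun n => add_nonneg (hx n) (hy n)

theorem posVec_smul_e {c : ℂ} (hc : 0 ≤ c) (l : ℕ) : PosVec (c • e l) := by
  rw [posVec_iff]
  intro m
  rw [lp.coeFn_smul, Pi.smul_apply, e_apply, smul_eq_mul]
  split_ifs <;> simp [hc]

theorem PosVec.sub_smul_e {x : L2} (hx : PosVec x) (n : ℕ) : PosVec (x - x n • e n) := by
  rw [posVec_iff] at *
  intro m
  rw [lp.coeFn_sub, Pi.sub_apply, lp.coeFn_smul, Pi.smul_apply, e_apply, smul_eq_mul]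
  split_ifs with hmn
  · simp [hmn]
  · simpa using hx m

theorem replaceColumn_e_mem_P1 {T : L2 →L[ℂ] L2} (hT : T ∈ P1) {l : ℕ}
    (hTl : ∀ y, ⟪e l, T y⟫ = 0) (n : ℕ) : replaceColumn T (e n) (e l) ∈ P1 := by
  refine ⟨fun x hx => ?_, ?_⟩
  · rw [replaceColumn_apply, inner_e_left]
    exact (hT.1 _ (hx.sub_smul_e n)).add (posVec_smul_e (posVec_iff.1 hx n) l)
  · exact norm_replaceColumn_le_one hT.2 (orthonormal_e.1 n) (orthonormal_e.1 l).le hTl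

section Topologies

variable {s : Set (L2 →L[ℂ] L2)} {ι : Type*} {F : Filter ι} {a : ι → s} {S : s}

theorem tendsto_rtop_sot_iff :
    Tendsto a F (@nhds _ (rtop s sot) S) ↔
      ∀ x, Tendsto (fun i => (a i : L2 →L[ℂ] L2) x) F (𝓝 ((S : L2 →L[ℂ] L2) x)) := by
  rw [rtop, @nhds_induced _ _ sot, sot, nhds_induced, tendsto_comap_iff, tendsto_comap_iff,
    tendsto_pi_nhds]
  rfl

theorem tendsto_rtop_sotStar_iff :
    Tendsto a F (@nhds _ (rtop s sotStar) S) ↔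
      ∀ x, Tendsto (fun i => adjoint (a i : L2 →L[ℂ] L2) x) F
        (𝓝 (adjoint (S : L2 →L[ℂ] L2) x)) := by
  rw [rtop, @nhds_induced _ _ sotStar, sotStar, nhds_induced, tendsto_comap_iff,
    tendsto_comap_iff, tendsto_pi_nhds]
  rfl

theorem nhds_rtop_sotSStar_le_sotStar :
    @nhds _ (rtop s sotSStar) S ≤ @nhds _ (rtop s sotStar) S :=
  nhds_mono (induced_mono inf_le_right)

end Topologies

/-- Let `T ∈ 𝒫₁(ℓ₂)`.  If `T` is a point of continuity of the identity
map from `(𝒫₁(ℓ₂), SOT)` to `(𝒫₁(ℓ₂), SOT*)`, then `T* e_l ≠ 0` for every `l ≥ 0`,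
where `T*` is the Hilbert-space adjoint of `T`. -/
theorem continuity_point_sot_sotSStar_adjoint_nonzero_on_basis (T : ↥P1)
    (h : @ContinuousAt ↥P1 ↥P1 (rtop P1 sot) (rtop P1 sotSStar) id T) :
    ∀ l : ℕ, (ContinuousLinearMap.adjoint (T : L2 →L[ℂ] L2)) (e l) ≠ 0 := by
  intro l hl
  have hTl : ∀ y, ⟪e l, (T : L2 →L[ℂ] L2) y⟫ = 0 := fun y => by
    rw [← adjoint_inner_left, hl, inner_zero_left]
  let a : ℕ → P1 := fun n => ⟨replaceColumn T (e n) (e l), replaceColumn_e_mem_P1 T.2 hTl n⟩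
  have ha_sot : Tendsto a atTop (@nhds _ (rtop P1 sot) T) :=
    tendsto_rtop_sot_iff.2 fun x => tendsto_replaceColumn_apply T.2.2 orthonormal_e.1
      (orthonormal_e.1 l).le
      (Nat.cofinite_eq_atTop ▸ orthonormal_e.tendsto_inner_cofinite_zero x)
  have ha_star : Tendsto a atTop (@nhds _ (rtop P1 sotStar) T) :=
    (Tendsto.comp h ha_sot).mono_right nhds_rtop_sotSStar_le_sotStar
  have he : Tendsto e atTop (𝓝 0) := by
    simpa [a, adjoint_replaceColumn_apply _ (orthonormal_e.1 l) hTl, hl] using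
      tendsto_rtop_sotStar_iff.1 ha_star (e l)
  simpa [orthonormal_e.1] using he.norm
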